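/- arXiv:1805.07532 — 2 statements merged into one kernel-verified Lean document; each statement's English description precedes it below -/
import Mathlib

section
/- For every x > 0 and every t ≥ 0, the second moment of the capital-per-capita process satisfies E[(X^x_t)²] ≤ 2^{2η−1} e^{σ² t} ( x² + t^{2η−1}/σ² ). -/
/-!
Writing `B_t = x^(1-α) + (1-α) ∫₀ᵗ G_s ds`, we have `(X_t)² = (B_t / G_t)^(2η)`. Convexity of
`y ↦ y^(2η)` and Jensen's inequality on `(0, t]` give
`(X_t)² ≤ 2^(2η-1) (x² (G_0/G_t)^(2η) + t^(2η-1) ∫₀ᵗ (G_s/G_t)^(2η) ds)`, using `G_0 = 1`.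
Since `(1-α)·2η = 2` and `c, μ ≥ 0`, the drift gives
`(G_s/G_t)^(2η) ≤ e^(-σ²(t-s)) e^(-2σ(W_t - W_s))`, so by the Gaussian moment generating function
`E[(G_s/G_t)^(2η)] ≤ e^(σ²(t-s))`, and `∫₀ᵗ e^(σ²(t-s)) ds ≤ e^(σ²t)/σ²`.
-/

open MeasureTheory ProbabilityTheory Real Set Filter
open scoped ENNReal NNReal

theorem sq_rpow_neg_mul_rpow {g b η : ℝ} (hg : 0 < g) (hb : 0 ≤ b) :
    (g ^ (-η) * b ^ η) ^ 2 = (b / g) ^ (2 * η) := by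
  rw [Real.rpow_neg hg.le, ← div_eq_inv_mul, ← Real.div_rpow hb hg.le, mul_comm 2 η,
    ← Real.rpow_mul_natCast (div_nonneg hb hg.le)]
  norm_num

theorem ofReal_integral_le_lintegral_ofReal {α : Type*} [MeasurableSpace α] {μ : Measure α}
    {f : α → ℝ} (hf : 0 ≤ᵐ[μ] f) :
    ENNReal.ofReal (∫ a, f a ∂μ) ≤ ∫⁻ a, ENNReal.ofReal (f a) ∂μ := by
  by_cases hi : Integrable f μ
  · exact (ofReal_integral_eq_lintegral_ofReal hi hf).le
  · simp [integral_undef hi]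

theorem ENNReal.rpow_lintegral_le_mul_lintegral_rpow {α : Type*} [MeasurableSpace α]
    {μ : Measure α} {f : α → ℝ≥0∞} (hf : AEMeasurable f μ) {p : ℝ} (hp : 1 ≤ p) :
    (∫⁻ a, f a ∂μ) ^ p ≤ μ univ ^ (p - 1) * ∫⁻ a, f a ^ p ∂μ := by
  rcases hp.eq_or_lt with rfl | hp
  · simp
  have hpq := Real.HolderConjugate.conjExponent hp
  have holder := ENNReal.lintegral_mul_le_Lp_mul_Lq μ hpq hf aemeasurable_const (g := 1)
  simp only [Pi.mul_apply, Pi.one_apply, mul_one, ENNReal.one_rpow, lintegral_const,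
    one_mul] at holder
  calc (∫⁻ a, f a ∂μ) ^ p
      ≤ ((∫⁻ a, f a ^ p ∂μ) ^ (1 / p) * μ univ ^ (1 / p.conjExponent)) ^ p := by gcongr
    _ = μ univ ^ (p - 1) * ∫⁻ a, f a ^ p ∂μ := by
        have hp0 : p ≠ 0 := by positivity
        rw [ENNReal.mul_rpow_of_nonneg _ _ (by positivity), ← ENNReal.rpow_mul,
          ← ENNReal.rpow_mul, one_div_mul_cancel hp0, ENNReal.rpow_one, mul_comm,
          Real.conjExponent, one_div_div, div_mul_eq_mul_div, mul_div_assoc, div_self hp0, mul_one]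

theorem ofReal_add_mul_setIntegral_div_rpow_le {g : ℝ → ℝ} (hg : Measurable g)
    (hg0 : ∀ s, 0 ≤ g s) {a d l p t : ℝ} (ha : 0 ≤ a) (hd : 0 < d) (hl0 : 0 ≤ l)
    (hl1 : l ≤ 1) (hp : 1 ≤ p) :
    ENNReal.ofReal ((a + l * ∫ s in Ioc 0 t, g s) / d) ^ p
      ≤ 2 ^ (p - 1) * (ENNReal.ofReal (a / d) ^ p
        + ENNReal.ofReal t ^ (p - 1) * ∫⁻ s in Ioc 0 t, ENNReal.ofReal (g s / d) ^ p) := by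
  have hint : ENNReal.ofReal (l * (∫ s in Ioc 0 t, g s) / d)
      ≤ ∫⁻ s in Ioc 0 t, ENNReal.ofReal (g s / d) := by
    have hI : 0 ≤ ∫ s in Ioc 0 t, g s := integral_nonneg hg0
    calc ENNReal.ofReal (l * (∫ s in Ioc 0 t, g s) / d)
        ≤ ENNReal.ofReal (∫ s in Ioc 0 t, g s / d) := by
          rw [integral_div]
          gcongr
          exact mul_le_of_le_one_left hI hl1
      _ ≤ _ := ofReal_integral_le_lintegral_ofReal (ae_of_all _ fun s => div_nonneg (hg0 s) hd.le)
  calc ENNReal.ofReal ((a + l * ∫ s in Ioc 0 t, g s) / d) ^ p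
      ≤ (ENNReal.ofReal (a / d) + ∫⁻ s in Ioc 0 t, ENNReal.ofReal (g s / d)) ^ p := by
        rw [add_div, ENNReal.ofReal_add (by positivity)
          (div_nonneg (mul_nonneg hl0 (integral_nonneg hg0)) hd.le)]
        gcongr
    _ ≤ 2 ^ (p - 1) * (ENNReal.ofReal (a / d) ^ p
          + (∫⁻ s in Ioc 0 t, ENNReal.ofReal (g s / d)) ^ p) :=
        ENNReal.rpow_add_le_mul_rpow_add_rpow _ _ hp
    _ ≤ _ := by
        gcongr
        simpa using ENNReal.rpow_lintegral_le_mul_lintegral_rpow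
          (μ := volume.restrict (Ioc 0 t)) (by fun_prop) hp

theorem measurable_setIntegral_Ioc {Ω : Type*} [MeasurableSpace Ω] {f : ℝ → Ω → ℝ}
    (hf : Measurable (Function.uncurry f)) (a : ℝ) :
    Measurable fun q : ℝ × Ω => ∫ s in Ioc a q.1, f s q.2 := by
  have hset : MeasurableSet {r : (ℝ × Ω) × ℝ | r.2 ∈ Ioc a r.1.1} :=
    (measurableSet_lt measurable_const measurable_snd).inter
      (measurableSet_le measurable_snd measurable_fst.fst)
  have hint : Measurable fun r : (ℝ × Ω) × ℝ =>
      {r : (ℝ × Ω) × ℝ | r.2 ∈ Ioc a r.1.1}.indicator (fun r => f r.2 r.1.2) r :=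
    (hf.comp (measurable_snd.prodMk measurable_fst.snd)).indicator hset
  simp_rw [← integral_indicator measurableSet_Ioc]
  exact (hint.stronglyMeasurable.integral_prod_right' (ν := volume)).measurable

theorem mul_sub_le_setIntegral_Ioc_sub {f : ℝ → ℝ} {m a b c : ℝ} (hab : a ≤ b)
    (hbc : b ≤ c) (hf : IntegrableOn f (Ioc a c)) (hm : ∀ u ∈ Ioc b c, m ≤ f u) :
    m * (c - b) ≤ (∫ u in Ioc a c, f u) - ∫ u in Ioc a b, f u := by
  rw [← intervalIntegral.integral_of_le (hab.trans hbc), ← intervalIntegral.integral_of_le hab,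
    intervalIntegral.integral_interval_sub_left
      ((intervalIntegrable_iff_integrableOn_Ioc_of_le (hab.trans hbc)).mpr hf)
      ((intervalIntegrable_iff_integrableOn_Ioc_of_le hab).mpr
        (hf.mono_set (Ioc_subset_Ioc_right hbc))),
    intervalIntegral.integral_of_le hbc]
  simpa [Real.volume_real_Ioc_of_le hbc] using setIntegral_ge_of_const_le_real measurableSet_Ioc
    measure_Ioc_lt_top.ne hm (hf.mono_set (Ioc_subset_Ioc_left hab))

theorem setLIntegral_Ioc_ofReal_exp_mul_sub_le {k : ℝ} (hk : 0 < k) (t : ℝ) :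
    ∫⁻ s in Ioc 0 t, ENNReal.ofReal (exp (k * (t - s))) ≤ ENNReal.ofReal (exp (k * t) / k) :=
  calc ∫⁻ s in Ioc 0 t, ENNReal.ofReal (exp (k * (t - s)))
      ≤ ∫⁻ s in Ioi 0, ENNReal.ofReal (exp (k * t)) * ENNReal.ofReal (exp (-k * s)) := by
        refine (lintegral_mono_set Ioc_subset_Ioi_self).trans_eq (lintegral_congr fun s => ?_)
        rw [← ENNReal.ofReal_mul (exp_pos _).le, ← exp_add]
        ring_nf
    _ = ENNReal.ofReal (exp (k * t) / k) := by
        rw [lintegral_const_mul' _ _ ENNReal.ofReal_ne_top, ← ofReal_integral_eq_lintegral_ofReal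
          (integrableOn_exp_mul_Ioi (neg_neg_of_pos hk) 0) (ae_of_all _ fun _ => (exp_pos _).le),
          integral_exp_mul_Ioi (neg_neg_of_pos hk), ← ENNReal.ofReal_mul (exp_pos _).le]
        congr 1
        simp [div_eq_mul_inv]

theorem lintegral_le_of_ae_le_mul_add_lintegral {Ω β : Type*} [MeasurableSpace Ω]
    [MeasurableSpace β] {P : Measure Ω} [SFinite P] {ν : Measure β} [SFinite ν]
    {R : β → Ω → ℝ≥0∞} (hR : Measurable (Function.uncurry R)) {F : Ω → ℝ≥0∞}
    {m : β → ℝ≥0∞} {K C T : ℝ≥0∞} {s₀ : β}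
    (hF : ∀ᵐ ω ∂P, F ω ≤ K * (C * R s₀ ω + T * ∫⁻ s, R s ω ∂ν))
    (h₀ : ∫⁻ ω, R s₀ ω ∂P ≤ m s₀) (hm : ∀ᵐ s ∂ν, ∫⁻ ω, R s ω ∂P ≤ m s) :
    ∫⁻ ω, F ω ∂P ≤ K * (C * m s₀ + T * ∫⁻ s, m s ∂ν) :=
  calc ∫⁻ ω, F ω ∂P
      ≤ ∫⁻ ω, K * (C * R s₀ ω + T * ∫⁻ s, R s ω ∂ν) ∂P := lintegral_mono_ae hF
    _ = K * (C * ∫⁻ ω, R s₀ ω ∂P + T * ∫⁻ s, ∫⁻ ω, R s ω ∂P ∂ν) := by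
        have hR₀ : Measurable (R s₀) := hR.of_uncurry_left
        have hRν : Measurable fun ω => ∫⁻ s, R s ω ∂ν := hR.lintegral_prod_left'
        rw [lintegral_const_mul _ (by fun_prop), lintegral_add_left (by fun_prop),
          lintegral_const_mul _ hR₀, lintegral_const_mul _ hRν,
          lintegral_lintegral_swap (f := fun ω s => R s ω) (hR.comp measurable_swap).aemeasurable]
    _ ≤ K * (C * m s₀ + T * ∫⁻ s, m s ∂ν) := by
        gcongr _ * (_ * ?_ + _ * ?_)
        exact lintegral_mono_ae hm

theorem lintegral_ofReal_exp_mul_of_map_eq_gaussianReal {Ω : Type*} [MeasurableSpace Ω]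
    {P : Measure Ω} {f : Ω → ℝ} (hf : AEMeasurable f P) {v : ℝ≥0}
    (hmap : P.map f = gaussianReal 0 v) (b : ℝ) :
    ∫⁻ ω, ENNReal.ofReal (exp (b * f ω)) ∂P = ENNReal.ofReal (exp (v * b ^ 2 / 2)) := by
  rw [← lintegral_map' (f := fun y => ENNReal.ofReal (exp (b * y))) (by fun_prop) hf, hmap,
    ← ofReal_integral_eq_lintegral_ofReal (integrable_exp_mul_gaussianReal b)
       (ae_of_all _ fun _ => (exp_pos _).le)]
  congr 1
  simpa [mgf] using congrFun (mgf_id_gaussianReal (μ := 0) (v := v)) b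

theorem lintegral_ofReal_exp_le_of_le_add_mul {Ω : Type*} [MeasurableSpace Ω]
    {P : Measure Ω} {f Z : Ω → ℝ} (hf : AEMeasurable f P) {v : ℝ≥0}
    (hmap : P.map f = gaussianReal 0 v) {a b : ℝ} (hZ : ∀ᵐ ω ∂P, Z ω ≤ a + b * f ω) :
    ∫⁻ ω, ENNReal.ofReal (exp (Z ω)) ∂P ≤ ENNReal.ofReal (exp (a + v * b ^ 2 / 2)) :=
  calc ∫⁻ ω, ENNReal.ofReal (exp (Z ω)) ∂P
      ≤ ∫⁻ ω, ENNReal.ofReal (exp a) * ENNReal.ofReal (exp (b * f ω)) ∂P := by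
        refine lintegral_mono_ae (hZ.mono fun ω hω => ?_)
        rw [← ENNReal.ofReal_mul (exp_pos _).le, ← exp_add]
        exact ENNReal.ofReal_le_ofReal (exp_le_exp.mpr hω)
    _ = ENNReal.ofReal (exp (a + v * b ^ 2 / 2)) := by
        rw [lintegral_const_mul' _ _ ENNReal.ofReal_ne_top,
          lintegral_ofReal_exp_mul_of_map_eq_gaussianReal hf hmap, ← ENNReal.ofReal_mul
          (exp_pos _).le, ← exp_add]

namespace StochasticRamsey

theorem measurable_uncurry_G {Ω : Type*} [MeasurableSpace Ω] {α μ σ : ℝ}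
    {W c G : ℝ → Ω → ℝ} (hWmeas : Measurable (Function.uncurry W))
    (hcmeas : Measurable (Function.uncurry c))
    (hG : ∀ t ω, G t ω =
      Real.exp ((∫ s in Ioc (0 : ℝ) t, (1 - α) * (μ + c s ω + σ ^ 2 / 2))
        + (1 - α) * σ * W t ω)) :
    Measurable (Function.uncurry G) := by
  have hdrift : Measurable fun q : ℝ × Ω => (1 - α) * (μ + c q.1 q.2 + σ ^ 2 / 2) :=
    measurable_const.mul ((measurable_const.add hcmeas).add measurable_const)
  rw [show Function.uncurry G = _ from funext fun q => hG q.1 q.2]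
  exact ((measurable_setIntegral_Ioc (f := fun u ω => (1 - α) * (μ + c u ω + σ ^ 2 / 2))
    hdrift 0).add (measurable_const.mul hWmeas)).exp

theorem ae_ofReal_sq_X_le {Ω : Type*} [MeasurableSpace Ω] {P : Measure Ω}
    {α μ σ η : ℝ} (hα0 : 0 ≤ α) (hα1 : α < 1) (hη : η = 1 / (1 - α))
    {W : ℝ → Ω → ℝ} (hW0 : ∀ᵐ ω ∂P, W 0 ω = 0) {c G : ℝ → Ω → ℝ}
    (hG : ∀ t ω, G t ω =
      Real.exp ((∫ s in Ioc (0 : ℝ) t, (1 - α) * (μ + c s ω + σ ^ 2 / 2))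
        + (1 - α) * σ * W t ω))
    (hGmeas : Measurable (Function.uncurry G))
    {X : ℝ → ℝ → Ω → ℝ}
    (hX : ∀ x t ω, X x t ω =
      (G t ω) ^ (-η) * (x ^ (1 - α) + (1 - α) * ∫ s in Ioc (0 : ℝ) t, G s ω) ^ η)
    {x : ℝ} (hx : 0 < x) (t : ℝ) :
    ∀ᵐ ω ∂P, ENNReal.ofReal (X x t ω ^ 2)
      ≤ 2 ^ (2 * η - 1) * (ENNReal.ofReal (x ^ 2) * ENNReal.ofReal (G 0 ω / G t ω) ^ (2 * η)
        + ENNReal.ofReal t ^ (2 * η - 1)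
          * ∫⁻ s in Ioc 0 t, ENNReal.ofReal (G s ω / G t ω) ^ (2 * η)) := by
  have hGpos : ∀ r ω, 0 < G r ω := fun r ω => hG r ω ▸ exp_pos _
  have h1α : 0 < 1 - α := sub_pos.mpr hα1
  have hp : 1 ≤ 2 * η := by
    rw [hη, mul_one_div, le_div_iff₀ h1α]
    linarith
  filter_upwards [hW0] with ω hω0
  have hG0 : G 0 ω = 1 := by simp [hG, hω0]
  have hxp : 0 ≤ x ^ (1 - α) := rpow_nonneg hx.le _
  have hI : 0 ≤ x ^ (1 - α) + (1 - α) * ∫ s in Ioc 0 t, G s ω :=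
    add_nonneg hxp (mul_nonneg h1α.le (integral_nonneg fun s => (hGpos s ω).le))
  rw [hX, sq_rpow_neg_mul_rpow (hGpos t ω) hI, ← ENNReal.ofReal_rpow_of_nonneg
    (div_nonneg hI (hGpos t ω).le) (by linarith)]
  convert ofReal_add_mul_setIntegral_div_rpow_le (hGmeas.of_uncurry_right (y := ω))
    (fun s => (hGpos s ω).le) hxp (hGpos t ω) h1α.le (by linarith) hp using 4
  have hxη : (1 - α) * (2 * η) = 2 := by rw [hη]; field_simp
  rw [hG0, div_eq_mul_one_div (x ^ (1 - α)), ENNReal.ofReal_mul hxp,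
    ENNReal.mul_rpow_of_nonneg _ _ (by linarith), ENNReal.ofReal_rpow_of_nonneg hxp (by linarith),
    ← rpow_mul hx.le, hxη, rpow_two]

theorem lintegral_ofReal_G_div_rpow_le {Ω : Type*} [MeasurableSpace Ω] {P : Measure Ω}
    {α μ σ η : ℝ} (hα1 : α < 1) (hμ : 0 ≤ μ) (hη : η = 1 / (1 - α))
    {W : ℝ → Ω → ℝ} (hW : ∀ t, Measurable (W t))
    (hWgauss : ∀ s t : ℝ, 0 ≤ s → s ≤ t →
      P.map (fun ω => W t ω - W s ω) = gaussianReal 0 (Real.toNNReal (t - s)))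
    {c : ℝ → Ω → ℝ} (hcnonneg : ∀ t ω, 0 ≤ c t ω)
    (hcint : ∀ᵐ ω ∂P, ∀ t ≥ (0 : ℝ), IntegrableOn (fun s => c s ω) (Ioc 0 t))
    {G : ℝ → Ω → ℝ}
    (hG : ∀ t ω, G t ω =
      Real.exp ((∫ s in Ioc (0 : ℝ) t, (1 - α) * (μ + c s ω + σ ^ 2 / 2))
        + (1 - α) * σ * W t ω))
    {s t : ℝ} (hs : 0 ≤ s) (hst : s ≤ t) :
    ∫⁻ ω, ENNReal.ofReal (G s ω / G t ω) ^ (2 * η) ∂P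
      ≤ ENNReal.ofReal (exp (σ ^ 2 * (t - s))) := by
  set A : ℝ → Ω → ℝ := fun r ω =>
    ∫ u in Ioc (0 : ℝ) r, (1 - α) * (μ + c u ω + σ ^ 2 / 2)
  have h1α : 0 < 1 - α := sub_pos.mpr hα1
  have hηα : η * (1 - α) = 1 := by rw [hη]; field_simp
  have hη0 : 0 ≤ 2 * η := by rw [hη]; positivity
  have hdrift : ∀ᵐ ω ∂P, (1 - α) * (σ ^ 2 / 2) * (t - s) ≤ A t ω - A s ω := by
    filter_upwards [hcint] with ω hω
    refine mul_sub_le_setIntegral_Ioc_sub hs hst ?_ fun u _ => ?_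
    · refine Integrable.const_mul ?_ _
      exact ((integrableOn_const measure_Ioc_lt_top.ne).add (hω t (hs.trans hst))).add
        (integrableOn_const measure_Ioc_lt_top.ne)
    · nlinarith [hcnonneg u ω]
  have hexp : ∀ ω, ENNReal.ofReal (G s ω / G t ω) ^ (2 * η) = ENNReal.ofReal
      (exp ((A s ω - A t ω - (1 - α) * σ * (W t ω - W s ω)) * (2 * η))) := by
    intro ω
    rw [hG, hG, ← exp_sub, ENNReal.ofReal_rpow_of_nonneg (exp_pos _).le hη0, ← exp_mul]
    congr 3
    ring
  simp_rw [hexp]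
  convert lintegral_ofReal_exp_le_of_le_add_mul (f := fun ω => W t ω - W s ω)
    ((hW t).sub (hW s)).aemeasurable (hWgauss s t hs hst) (a := -(σ ^ 2 * (t - s))) (b := -(2 * σ)) ?_ using 3
  · rw [Real.coe_toNNReal _ (sub_nonneg.mpr hst)]
    ring
  · filter_upwards [hdrift] with ω hω
    linear_combination mul_le_mul_of_nonneg_left hω hη0
      - (σ ^ 2 * (t - s) + 2 * σ * (W t ω - W s ω)) * hηα

end StochasticRamsey

/-- Second moment estimate `E[(X^x_t)²] ≤ 2^(2η-1) e^(σ²t) (x² + t^(2η-1)/σ²)` for the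
capital-per-capita process in the stochastic Ramsey problem. -/
theorem ramsey_second_moment_estimate
    {Ω : Type*} [MeasurableSpace Ω] (P : Measure Ω) [IsProbabilityMeasure P]
    (α μ σ η : ℝ) (hα0 : 0 < α) (hα1 : α < 1) (hμ : 0 < μ) (hσ : 0 < σ)
    (hη : η = 1 / (1 - α))
    (W : ℝ → Ω → ℝ)
    (hWmeas : Measurable (Function.uncurry W))
    (hW0 : ∀ᵐ ω ∂P, W 0 ω = 0)
    (hWgauss : ∀ s t : ℝ, 0 ≤ s → s ≤ t →
      P.map (fun ω => W t ω - W s ω) =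
        ProbabilityTheory.gaussianReal 0 (Real.toNNReal (t - s)))
    (c : ℝ → Ω → ℝ)
    (hcmeas : Measurable (Function.uncurry c))
    (hcnonneg : ∀ t ω, 0 ≤ c t ω)
    (hcint : ∀ᵐ ω ∂P, ∀ t ≥ (0 : ℝ), IntegrableOn (fun s => c s ω) (Ioc 0 t))
    (G : ℝ → Ω → ℝ)
    (hG : ∀ t ω, G t ω =
      Real.exp ((∫ s in Ioc (0 : ℝ) t, (1 - α) * (μ + c s ω + σ ^ 2 / 2))
        + (1 - α) * σ * W t ω))
    (X : ℝ → ℝ → Ω → ℝ)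
    (hX : ∀ x t ω, X x t ω =
      (G t ω) ^ (-η) * (x ^ (1 - α) + (1 - α) * ∫ s in Ioc (0 : ℝ) t, G s ω) ^ η) :
    ∀ x > (0 : ℝ), ∀ t ≥ (0 : ℝ),
      ∫⁻ ω, ENNReal.ofReal ((X x t ω) ^ 2) ∂P
        ≤ ENNReal.ofReal
            ((2 : ℝ) ^ (2 * η - 1) * Real.exp (σ ^ 2 * t) * (x ^ 2 + t ^ (2 * η - 1) / σ ^ 2)) := by
  intro x hx t ht
  have hη1 : 1 ≤ η := hη ▸ one_le_one_div (sub_pos.mpr hα1) (by linarith)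
  have hGmeas := StochasticRamsey.measurable_uncurry_G hWmeas hcmeas hG
  set R : ℝ → Ω → ℝ≥0∞ := fun s ω => ENNReal.ofReal (G s ω / G t ω) ^ (2 * η)
  have hR : Measurable (Function.uncurry R) :=
    (hGmeas.div (hGmeas.of_uncurry_left.comp measurable_snd)).ennreal_ofReal.pow_const _
  have hmoment : ∀ s, 0 ≤ s → s ≤ t →
      ∫⁻ ω, R s ω ∂P ≤ ENNReal.ofReal (exp (σ ^ 2 * (t - s))) :=
    fun s hs hst => StochasticRamsey.lintegral_ofReal_G_div_rpow_le hα1 hμ.le hη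
      (fun r => hWmeas.of_uncurry_left) hWgauss hcnonneg hcint hG hs hst
  calc ∫⁻ ω, ENNReal.ofReal (X x t ω ^ 2) ∂P
      ≤ 2 ^ (2 * η - 1) * (ENNReal.ofReal (x ^ 2) * ENNReal.ofReal (exp (σ ^ 2 * (t - 0)))
          + ENNReal.ofReal t ^ (2 * η - 1)
            * ∫⁻ s in Ioc 0 t, ENNReal.ofReal (exp (σ ^ 2 * (t - s)))) :=
        lintegral_le_of_ae_le_mul_add_lintegral hR
          (StochasticRamsey.ae_ofReal_sq_X_le hα0.le hα1 hη hW0 hG hGmeas hX hx t)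
          (hmoment 0 le_rfl ht)
          ((ae_restrict_iff' measurableSet_Ioc).mpr
            (ae_of_all _ fun s hs => hmoment s hs.1.le hs.2))
    _ ≤ 2 ^ (2 * η - 1) * (ENNReal.ofReal (x ^ 2) * ENNReal.ofReal (exp (σ ^ 2 * t))
          + ENNReal.ofReal t ^ (2 * η - 1) * ENNReal.ofReal (exp (σ ^ 2 * t) / σ ^ 2)) := by
        rw [sub_zero]
        gcongr
        exact setLIntegral_Ioc_ofReal_exp_mul_sub_le (by positivity) t
    _ = _ := by
        rw [ENNReal.ofReal_rpow_of_nonneg ht (by linarith), ← ENNReal.ofReal_mul (sq_nonneg _),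
          ← ENNReal.ofReal_mul (by positivity),
          ← ENNReal.ofReal_add (by positivity) (by positivity),
          show (2 : ℝ≥0∞) = ENNReal.ofReal 2 by simp, ENNReal.ofReal_rpow_of_pos two_pos,
          ← ENNReal.ofReal_mul (by positivity)]
        congr 1
        ring
end

section
/- As x ↓ 0, v' is of the exact order x^{−α}: lim_{x↓0} x^α v'(x) = β v(0+) > 0; moreover the candidate optimal consumption is dominated by x^α at the origin: lim_{x↓0} I(v'(x)) / x^α = 0. -/
open Set Filter Topology

/-!
With the convex dual `Ũ p = U (I p) - p I p`, the HJB equation reads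
`σ²x²/2 · v'' = D - x^α v'` where `D = β v + μ x v' - Ũ(v')`. Concavity gives `v'' ≤ 0`, hence
`D ≤ x^α v'`, and `x v'(x) ≤ 2 (v x - v (x/2)) → 0`.

If `v'` were bounded, with supremum `L`, then letting `x → 0` in `D ≤ x^α v'` gives
`Ũ(L) ≥ β v(0+)`, and the equation forces `x² v'' ≤ -c x^α` near `0`. Integrating against the
primitive of `x^(α-2)` makes `x^(1-α) v'` bounded away from `0`, although it tends to `0 · L`.
Hence `v' → ∞`, so `Ũ(v') → 0` and `D → β v(0+)`, which is the lower bound for `F = x^α v'`.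

For the upper bound, `F` satisfies `σ²x²/2 · F' = x^α (E - F)` with `E → β v(0+)`. If `F` exceeded
`β v(0+) + 3δ` arbitrarily close to `0`, then, since `F` decreases wherever it crosses
`β v(0+) + 2δ`, it would stay above that level to the left, where `x² F' ≤ -c x^α`; as before
`x^(1-α) F = x v'` would then stay away from `0`. Finally `I(v')/x^α = v' I(v') / (x^α v')`, and
`p I(p) ≤ U(I p) → 0` as `p → ∞`.
-/

lemma tendsto_rpow_nhdsGT_zero_of_pos {r : ℝ} (hr : 0 < r) :
    Tendsto (fun x : ℝ => x ^ r) (𝓝[>] 0) (𝓝 0) := by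
  have h := (Real.continuousAt_rpow_const 0 r (Or.inr hr.le)).tendsto
  rw [Real.zero_rpow hr.ne'] at h
  exact h.mono_left nhdsWithin_le_nhds

lemma eventually_mul_le_mul_rpow_nhdsGT_zero (K : ℝ) {α ε : ℝ} (hα : α < 1) (hε : 0 < ε) :
    ∀ᶠ x in 𝓝[>] 0, K * x ≤ ε * x ^ α := by
  have h0 : Tendsto (fun x => K * x ^ (1 - α)) (𝓝[>] 0) (𝓝 0) := by
    simpa using (tendsto_rpow_nhdsGT_zero_of_pos (sub_pos.2 hα)).const_mul K
  filter_upwards [h0.eventually_le_const hε, self_mem_nhdsWithin] with x hx (hx0 : 0 < x)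
  have hsplit : x ^ (1 - α) * x ^ α = x := by
    rw [← Real.rpow_add hx0]
    simp
  calc K * x = K * x ^ (1 - α) * x ^ α := by rw [mul_assoc, hsplit]
    _ ≤ ε * x ^ α := mul_le_mul_of_nonneg_right hx (Real.rpow_nonneg hx0.le α)

lemma ConcaveOn.le_add_mul_sub_of_hasDerivAt {s : Set ℝ} {f : ℝ → ℝ} {f' x y : ℝ}
    (hf : ConcaveOn ℝ s f) (hx : x ∈ s) (hy : y ∈ s) (hf' : HasDerivAt f f' x) :
    f y ≤ f x + f' * (y - x) := by
  rcases lt_trichotomy x y with hxy | rfl | hyx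
  · have h := hf.slope_le_of_hasDerivAt hx hy hxy hf'
    rw [slope_def_field, div_le_iff₀ (sub_pos.2 hxy)] at h
    linarith
  · simp
  · have h := hf.le_slope_of_hasDerivAt hy hx hyx hf'
    rw [slope_def_field, le_div_iff₀ (sub_pos.2 hyx)] at h
    linarith

lemma AntitoneOn.tendsto_nhdsGT_atTop {f : ℝ → ℝ} {a : ℝ} (hf : AntitoneOn f (Ioi a))
    (h : ¬BddAbove (f '' Ioi a)) : Tendsto f (𝓝[>] a) atTop := by
  refine tendsto_atTop.2 fun C => ?_
  obtain ⟨_, ⟨x, hx, rfl⟩, hCx⟩ := not_bddAbove_iff.1 h C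
  filter_upwards [Ioo_mem_nhdsGT hx] with t ht
  exact hCx.le.trans (hf ht.1 hx ht.2.le)

lemma le_of_hasDerivAt_neg_of_eq {F F' : ℝ → ℝ} {a b T : ℝ} (hab : a ≤ b)
    (hF : ∀ z ∈ Icc a b, HasDerivAt F (F' z) z) (hneg : ∀ z ∈ Ico a b, F z = T → F' z < 0)
    (hb : T < F b) : T ≤ F a := by
  by_contra! ha
  have := image_le_of_deriv_right_lt_deriv_boundary' (B := fun _ => T) (B' := fun _ => 0)
    (fun z hz => (hF z hz).continuousAt.continuousWithinAt)
    (fun z hz => (hF z (Ico_subset_Icc_self hz)).hasDerivWithinAt) ha.le continuousOn_const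
    (fun _ _ => hasDerivWithinAt_const _ _ _) hneg (right_mem_Icc.2 hab)
  exact this.not_gt hb

lemma not_tendsto_rpow_mul_zero_of_sq_mul_deriv_le {h h' : ℝ → ℝ} {α c : ℝ} (hα : α < 1)
    (hc : 0 < c) (hd : ∀ᶠ z in 𝓝[>] 0, HasDerivAt h (h' z) z ∧ z ^ 2 * h' z ≤ -c * z ^ α) :
    ¬Tendsto (fun z => z ^ (1 - α) * h z) (𝓝[>] 0) (𝓝 0) := by
  obtain ⟨x, hx, hsub⟩ := mem_nhdsGT_iff_exists_Ioc_subset.1 hd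
  set K := c / (1 - α)
  have hK : 0 < K := div_pos hc (by linarith)
  have hg : ∀ z > 0, HasDerivAt (fun t => K * t ^ (α - 1)) (-c * z ^ α / z ^ 2) z := by
    intro z hz
    refine ((Real.hasDerivAt_rpow_const (p := α - 1) (Or.inl hz.ne')).const_mul K).congr_deriv ?_
    have h1α : 1 - α ≠ 0 := by linarith
    rw [Real.rpow_sub_one hz.ne', Real.rpow_sub_one hz.ne']
    simp only [K]
    field_simp
    ring
  have hanti : AntitoneOn (fun t => h t - K * t ^ (α - 1)) (Ioc 0 x) := by
    refine antitoneOn_of_hasDerivWithinAt_nonpos (convex_Ioc 0 x)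
      (f' := fun z => h' z - -c * z ^ α / z ^ 2)
      (fun z hz => ((hsub hz).1.sub (hg z hz.1)).continuousAt.continuousWithinAt)
      (fun z hz => ?_) (fun z hz => ?_) <;> rw [interior_Ioc] at hz
    · exact ((hsub (Ioo_subset_Ioc_self hz)).1.sub (hg z hz.1)).hasDerivWithinAt
    · have hz2 : 0 < z ^ 2 := pow_pos hz.1 2
      have := (hsub (Ioo_subset_Ioc_self hz)).2
      rw [sub_nonpos, le_div_iff₀ hz2]
      linarith
  have hlow : ∀ z ∈ Ioc 0 x, K + z ^ (1 - α) * (h x - K * x ^ (α - 1)) ≤ z ^ (1 - α) * h z := by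
    intro z hz
    have hmono := mul_le_mul_of_nonneg_left (hanti hz ⟨hx, le_rfl⟩ hz.2)
      (Real.rpow_nonneg hz.1.le (1 - α))
    have hinv : z ^ (1 - α) * z ^ (α - 1) = 1 := by
      rw [← Real.rpow_add hz.1]
      simp
    simp only at hmono
    linear_combination hmono - K * hinv
  have hlim : Tendsto (fun z => K + z ^ (1 - α) * (h x - K * x ^ (α - 1))) (𝓝[>] 0) (𝓝 K) := by
    simpa using tendsto_const_nhds.add
      ((tendsto_rpow_nhdsGT_zero_of_pos (sub_pos.2 hα)).mul_const (h x - K * x ^ (α - 1)))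
  intro htend
  have := le_of_tendsto_of_tendsto hlim htend
    (eventually_of_mem (Ioc_mem_nhdsGT hx) hlow)
  linarith

lemma eventually_lt_of_sq_mul_deriv_eq {F F' E : ℝ → ℝ} {α c e b : ℝ} (hα : α < 1) (hc : 0 < c)
    (hF : ∀ z > 0, HasDerivAt F (F' z) z)
    (hF' : ∀ z > 0, z ^ 2 * F' z = c * z ^ α * (E z - F z))
    (hE : Tendsto E (𝓝[>] 0) (𝓝 e))
    (hF0 : Tendsto (fun z => z ^ (1 - α) * F z) (𝓝[>] 0) (𝓝 0)) (heb : e < b) :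
    ∀ᶠ z in 𝓝[>] 0, F z < b := by
  obtain ⟨δ, hδ, rfl⟩ : ∃ δ > 0, b = e + 3 * δ := ⟨(b - e) / 3, by linarith, by ring⟩
  obtain ⟨x₁, hx₁, hEx₁⟩ := mem_nhdsGT_iff_exists_Ioc_subset.1
    (hE.eventually_lt_const (lt_add_of_pos_right e hδ))
  by_contra hnot
  obtain ⟨x, hbx, hx⟩ := ((not_eventually.1 hnot).and_eventually (Ioc_mem_nhdsGT hx₁)).exists
  have habove : ∀ z ∈ Ioc 0 x, e + 2 * δ ≤ F z := by
    refine fun z hz => le_of_hasDerivAt_neg_of_eq hz.2 (fun t ht => hF t (hz.1.trans_le ht.1))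
      (fun t ht hFt => ?_) (by linarith [not_lt.1 hbx])
    have ht0 : 0 < t := hz.1.trans_le ht.1
    have hEt : E t < e + δ := hEx₁ ⟨ht0, ht.2.le.trans hx.2⟩
    have hneg : t ^ 2 * F' t < 0 := by
      rw [hF' t ht0]
      exact mul_neg_of_pos_of_neg (by positivity) (by linarith)
    exact neg_of_mul_neg_right hneg (by positivity)
  refine not_tendsto_rpow_mul_zero_of_sq_mul_deriv_le (h' := F') hα (mul_pos hc hδ) ?_ hF0
  filter_upwards [Ioc_mem_nhdsGT hx.1] with z hz
  refine ⟨hF z hz.1, ?_⟩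
  have hEz : E z < e + δ := hEx₁ ⟨hz.1, hz.2.trans hx.2⟩
  have hgap : E z - F z ≤ -δ := by linarith [habove z hz]
  rw [hF' z hz.1]
  nlinarith [mul_pos hc (Real.rpow_pos_of_pos hz.1 α)]

lemma tendsto_rpow_mul_of_sq_mul_deriv_eq {g g' D : ℝ → ℝ} {α c d : ℝ} (hα : α < 1) (hc : 0 < c)
    (hg : ∀ x > 0, HasDerivAt g (g' x) x) (hg' : ∀ x > 0, g' x ≤ 0)
    (hODE : ∀ x > 0, x ^ 2 * g' x = c * (D x - x ^ α * g x))
    (hD : Tendsto D (𝓝[>] 0) (𝓝 d)) (hxg : Tendsto (fun x => x * g x) (𝓝[>] 0) (𝓝 0)) :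
    Tendsto (fun x => x ^ α * g x) (𝓝[>] 0) (𝓝 d) := by
  have hlower (x : ℝ) (hx : 0 < x) : D x ≤ x ^ α * g x := by
    have := hODE x hx ▸ mul_nonpos_of_nonneg_of_nonpos (sq_nonneg x) (hg' x hx)
    nlinarith
  have hupper (b : ℝ) (hb : d < b) : ∀ᶠ x in 𝓝[>] 0, x ^ α * g x < b := by
    refine eventually_lt_of_sq_mul_deriv_eq (E := fun x => α / c * (x * g x) + D x) hα hc
      (fun x hx => (Real.hasDerivAt_rpow_const (Or.inl hx.ne')).mul (hg x hx)) (fun x hx => ?_)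
      (by simpa using (hxg.const_mul (α / c)).add hD) (hxg.congr' ?_) hb
    · have hpow : x ^ 2 * x ^ (α - 1) = x ^ α * x := by
        rw [Real.rpow_sub_one hx.ne']
        field_simp
      field_simp
      linear_combination x ^ α * hODE x hx + α * g x * hpow
    · filter_upwards [self_mem_nhdsWithin] with x (hx : 0 < x)
      rw [← mul_assoc, ← Real.rpow_add hx]
      simp
  refine tendsto_order.2 ⟨fun a ha => ?_, hupper⟩
  filter_upwards [hD.eventually_const_lt ha, self_mem_nhdsWithin] with x h1 h2
  exact h1.trans_le (hlower x h2)

lemma ConcaveOn.antitoneOn_of_hasDerivAt {s : Set ℝ} {f f' : ℝ → ℝ} (hf : ConcaveOn ℝ s f)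
    (hf' : ∀ x ∈ s, HasDerivAt f (f' x) x) : AntitoneOn f' s := fun x hx y hy hxy => by
  simpa only [(hf' x hx).deriv, (hf' y hy).deriv] using
    hf.antitoneOn_deriv (fun z hz => (hf' z hz).differentiableAt) hx hy hxy

lemma ConcaveOn.tendsto_mul_deriv_nhdsGT_zero {v v' : ℝ → ℝ} {v0 : ℝ}
    (hv : ConcaveOn ℝ (Ioi 0) v) (hv' : ∀ x > 0, HasDerivAt v (v' x) x)
    (hv'nonneg : ∀ x > 0, 0 ≤ v' x) (hv0 : Tendsto v (𝓝[>] 0) (𝓝 v0)) :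
    Tendsto (fun x => x * v' x) (𝓝[>] 0) (𝓝 0) := by
  have hhalf : Tendsto (fun x : ℝ => x / 2) (𝓝[>] 0) (𝓝[>] 0) :=
    tendsto_nhdsWithin_of_tendsto_nhds_of_eventually_within _
      (by simpa using (tendsto_id (x := 𝓝 (0 : ℝ))).div_const 2 |>.mono_left nhdsWithin_le_nhds)
      (eventually_nhdsWithin_of_forall fun x (hx : 0 < x) => half_pos hx)
  have hup : Tendsto (fun x => 2 * (v x - v (x / 2))) (𝓝[>] 0) (𝓝 0) := by
    simpa using (hv0.sub (hv0.comp hhalf)).const_mul 2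
  refine tendsto_of_tendsto_of_tendsto_of_le_of_le' tendsto_const_nhds hup ?_ ?_
  all_goals filter_upwards [self_mem_nhdsWithin] with x (hx : 0 < x)
  · exact mul_nonneg hx.le (hv'nonneg x hx)
  · have := hv.le_add_mul_sub_of_hasDerivAt hx (half_pos hx) (hv' x hx)
    linarith

lemma ConcaveOn.le_add_mul_of_deriv_le {v v' : ℝ → ℝ} {v0 L x : ℝ}
    (hv : ConcaveOn ℝ (Ioi 0) v) (hv' : ∀ x > 0, HasDerivAt v (v' x) x)
    (hv'L : ∀ x > 0, v' x ≤ L) (hv0 : Tendsto v (𝓝[>] 0) (𝓝 v0)) (hx : 0 < x) :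
    v x ≤ v0 + L * x := by
  have hlim : Tendsto (fun y => v y + L * (x - y)) (𝓝[>] 0) (𝓝 (v0 + L * (x - 0))) :=
    hv0.add (((tendsto_const_nhds.sub tendsto_id).const_mul L).mono_left nhdsWithin_le_nhds)
  rw [sub_zero] at hlim
  refine ge_of_tendsto hlim ?_
  filter_upwards [Ioo_mem_nhdsGT hx] with y hy
  have := hv.le_add_mul_sub_of_hasDerivAt hy.1 hx (hv' y hy.1)
  nlinarith [hv'L y hy.1, hy.2]

/-- `legendreDual U I p = sup_{y ≥ 0} (U y - p * y)` when `I = (U')⁻¹`, the supremum being attained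
at `y = I p`. -/
noncomputable def legendreDual (U I : ℝ → ℝ) (p : ℝ) : ℝ := U (I p) - p * I p

section legendreDual

variable {U U' U'' I : ℝ → ℝ}

lemma sub_mul_le_legendreDual (hUcont : ContinuousOn U (Ici 0))
    (hU' : ∀ y > 0, HasDerivAt U (U' y) y) (hU'' : ∀ y > 0, HasDerivAt U' (U'' y) y)
    (hU''nonpos : ∀ y > 0, U'' y ≤ 0) (hIpos : ∀ p > 0, 0 < I p)
    (hIright : ∀ p > 0, U' (I p) = p) :
    ∀ p > 0, ∀ y ≥ 0, U y - p * y ≤ legendreDual U I p := by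
  have hU : ConcaveOn ℝ (Ici 0) U := by
    refine concaveOn_of_hasDerivWithinAt2_nonpos (convex_Ici 0) hUcont (f' := U') (f'' := U'')
      ?_ ?_ ?_ <;> rw [interior_Ici]
    exacts [fun y hy => (hU' y hy).hasDerivWithinAt, fun y hy => (hU'' y hy).hasDerivWithinAt,
      hU''nonpos]
  intro p hp y hy
  have := hU.le_add_mul_sub_of_hasDerivAt (mem_Ici.2 (hIpos p hp).le) hy (hU' _ (hIpos p hp))
  rw [hIright p hp] at this
  rw [legendreDual]
  linarith

lemma legendreDual_nonneg (hU0 : U 0 = 0)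
    (hsup : ∀ p > 0, ∀ y ≥ 0, U y - p * y ≤ legendreDual U I p) {p : ℝ} (hp : 0 < p) :
    0 ≤ legendreDual U I p := by
  simpa [hU0] using hsup p hp 0 le_rfl

lemma legendreDual_antitoneOn (hI : ∀ p > 0, 0 ≤ I p)
    (hsup : ∀ p > 0, ∀ y ≥ 0, U y - p * y ≤ legendreDual U I p) :
    AntitoneOn (legendreDual U I) (Ioi 0) := by
  intro q (hq : 0 < q) p (hp : 0 < p) hqp
  calc legendreDual U I p = U (I p) - p * I p := rfl
    _ ≤ U (I p) - q * I p := by nlinarith [hI p hp]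
    _ ≤ legendreDual U I q := hsup q hq _ (hI p hp)

lemma legendreDual_convexOn (hI : ∀ p > 0, 0 ≤ I p)
    (hsup : ∀ p > 0, ∀ y ≥ 0, U y - p * y ≤ legendreDual U I p) :
    ConvexOn ℝ (Ioi 0) (legendreDual U I) := by
  refine ⟨convex_Ioi 0, fun p hp q hq a b ha hb hab => ?_⟩
  have hy : 0 ≤ I (a • p + b • q) := hI _ (convex_Ioi 0 hp hq ha hb hab)
  set y := I (a • p + b • q)
  calc legendreDual U I (a • p + b • q) = a * (U y - p * y) + b * (U y - q * y) := by
        simp only [legendreDual, smul_eq_mul, y]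
        linear_combination U y * hab.symm
    _ ≤ a • legendreDual U I p + b • legendreDual U I q :=
        add_le_add (mul_le_mul_of_nonneg_left (hsup p hp y hy) ha)
          (mul_le_mul_of_nonneg_left (hsup q hq y hy) hb)

lemma tendsto_comp_rightInverse_atTop (hUcont : ContinuousOn U (Ici 0)) (hU0 : U 0 = 0)
    (hU'' : ∀ y > 0, HasDerivAt U' (U'' y) y) (hU''nonpos : ∀ y > 0, U'' y ≤ 0)
    (hIpos : ∀ p > 0, 0 < I p) (hIright : ∀ p > 0, U' (I p) = p) :
    Tendsto (fun p => U (I p)) atTop (𝓝 0) := by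
  have hU'anti : AntitoneOn U' (Ioi 0) := by
    refine antitoneOn_of_hasDerivWithinAt_nonpos (convex_Ioi 0) (f' := U'')
      (fun y hy => (hU'' y hy).continuousAt.continuousWithinAt) ?_ ?_ <;> rw [interior_Ioi]
    exacts [fun y hy => (hU'' y hy).hasDerivWithinAt, hU''nonpos]
  have hI : Tendsto I atTop (𝓝[≥] 0) := by
    refine tendsto_nhdsWithin_iff.2 ⟨tendsto_order.2 ⟨fun a ha => ?_, fun b hb => ?_⟩, ?_⟩
    · filter_upwards [eventually_gt_atTop 0] with p hp using ha.trans (hIpos p hp)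
    · filter_upwards [eventually_gt_atTop 0, eventually_gt_atTop (U' b)] with p hp hpb
      by_contra! hbI
      have := hU'anti hb (hIpos p hp) hbI
      rw [hIright p hp] at this
      linarith
    · filter_upwards [eventually_gt_atTop 0] with p hp using (hIpos p hp).le
  have := (hUcont 0 self_mem_Ici).tendsto.comp hI
  rwa [hU0] at this

lemma tendsto_legendreDual_atTop (hU0 : U 0 = 0) (hI : ∀ p > 0, 0 ≤ I p)
    (hsup : ∀ p > 0, ∀ y ≥ 0, U y - p * y ≤ legendreDual U I p)
    (hUI : Tendsto (fun p => U (I p)) atTop (𝓝 0)) :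
    Tendsto (legendreDual U I) atTop (𝓝 0) := by
  refine tendsto_of_tendsto_of_tendsto_of_le_of_le' tendsto_const_nhds hUI ?_ ?_
  all_goals filter_upwards [eventually_gt_atTop 0] with p hp
  · exact legendreDual_nonneg hU0 hsup hp
  · exact sub_le_self _ (mul_nonneg hp.le (hI p hp))

lemma tendsto_mul_rightInverse_atTop (hU0 : U 0 = 0) (hI : ∀ p > 0, 0 ≤ I p)
    (hsup : ∀ p > 0, ∀ y ≥ 0, U y - p * y ≤ legendreDual U I p)
    (hUI : Tendsto (fun p => U (I p)) atTop (𝓝 0)) :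
    Tendsto (fun p => p * I p) atTop (𝓝 0) := by
  refine tendsto_of_tendsto_of_tendsto_of_le_of_le' tendsto_const_nhds hUI ?_ ?_
  all_goals filter_upwards [eventually_gt_atTop 0] with p hp
  · exact mul_nonneg hp.le (hI p hp)
  · exact sub_nonneg.1 (legendreDual_nonneg hU0 hsup hp)

end legendreDual

lemma not_bddAbove_deriv_of_hjb {v v' v'' W : ℝ → ℝ} {α β μ c v0 : ℝ}
    (hα0 : 0 < α) (hα1 : α < 1) (hβ : 0 ≤ β) (hμ : 0 ≤ μ) (hc : 0 < c)
    (hconc : ConcaveOn ℝ (Ioi 0) v) (hv' : ∀ x > 0, HasDerivAt v (v' x) x)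
    (hv'' : ∀ x > 0, HasDerivAt v' (v'' x) x) (hv'anti : AntitoneOn v' (Ioi 0))
    (hv''nonpos : ∀ x > 0, v'' x ≤ 0) (hv'pos : ∀ x > 0, 0 < v' x)
    (hv0 : Tendsto v (𝓝[>] 0) (𝓝 v0))
    (hWanti : AntitoneOn W (Ioi 0)) (hWcont : ContinuousOn W (Ioi 0))
    (hHJB : ∀ x > 0,
      x ^ 2 * v'' x = c * (β * v x + μ * (x * v' x) - W (v' x) - x ^ α * v' x)) :
    ¬BddAbove (v' '' Ioi 0) := by
  intro hbdd
  have hlower (x : ℝ) (hx : 0 < x) : β * v x + μ * (x * v' x) - W (v' x) ≤ x ^ α * v' x := by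
    have := hHJB x hx ▸ mul_nonpos_of_nonneg_of_nonpos (sq_nonneg x) (hv''nonpos x hx)
    nlinarith
  obtain ⟨L, hL, hv'L⟩ : ∃ L, Tendsto v' (𝓝[>] 0) (𝓝 L) ∧ ∀ x > 0, v' x ≤ L :=
    ⟨_, hv'anti.tendsto_nhdsGT hbdd, fun x hx => le_csSup hbdd ⟨x, hx, rfl⟩⟩
  have hLpos : 0 < L := (hv'pos 1 one_pos).trans_le (hv'L 1 one_pos)
  have hWL : β * v0 ≤ W L := by
    have hid : Tendsto (fun x : ℝ => x) (𝓝[>] 0) (𝓝 0) := nhdsWithin_le_nhds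
    have hlhs : Tendsto (fun x => β * v x + μ * (x * v' x) - W (v' x)) (𝓝[>] 0)
        (𝓝 (β * v0 + μ * (0 * L) - W L)) :=
      ((hv0.const_mul β).add ((hid.mul hL).const_mul μ)).sub
        ((hWcont.continuousAt (Ioi_mem_nhds hLpos)).tendsto.comp hL)
    have hrhs : Tendsto (fun x => x ^ α * v' x) (𝓝[>] 0) (𝓝 (0 * L)) :=
      (tendsto_rpow_nhdsGT_zero_of_pos hα0).mul hL
    have := le_of_tendsto_of_tendsto hlhs hrhs
      (eventually_nhdsWithin_of_forall fun x hx => hlower x hx)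
    linarith
  refine not_tendsto_rpow_mul_zero_of_sq_mul_deriv_le (h' := v'') hα1 (c := c * (v' 1 / 2))
    (mul_pos hc (half_pos (hv'pos 1 one_pos))) ?_
    (by simpa using (tendsto_rpow_nhdsGT_zero_of_pos (sub_pos.2 hα1)).mul hL)
  filter_upwards [eventually_mul_le_mul_rpow_nhdsGT_zero ((β + μ) * L) hα1
    (half_pos (hv'pos 1 one_pos)), Ioo_mem_nhdsGT one_pos] with x hsmall ⟨hx0, hx1⟩
  refine ⟨hv'' x hx0, ?_⟩
  have h1 : x ^ α * v' 1 ≤ x ^ α * v' x :=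
    mul_le_mul_of_nonneg_left (hv'anti hx0 (mem_Ioi.2 one_pos) hx1.le) (Real.rpow_nonneg hx0.le α)
  have h2 : W L ≤ W (v' x) := hWanti (hv'pos x hx0) hLpos (hv'L x hx0)
  have h3 : β * v x ≤ β * (v0 + L * x) :=
    mul_le_mul_of_nonneg_left (hconc.le_add_mul_of_deriv_le hv' hv'L hv0 hx0) hβ
  have h4 : μ * (x * v' x) ≤ μ * (x * L) :=
    mul_le_mul_of_nonneg_left (mul_le_mul_of_nonneg_left (hv'L x hx0) hx0.le) hμ
  have hbound : β * v x + μ * (x * v' x) - W (v' x) - x ^ α * v' x ≤ -(v' 1 / 2 * x ^ α) := by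
    linarith
  rw [hHJB x hx0]
  nlinarith [mul_le_mul_of_nonneg_left hbound hc.le]

theorem hjb_solution_deriv_order_at_zero_general
    (α μ σ β : ℝ) (hα0 : 0 < α) (hα1 : α < 1) (hμ : 0 < μ) (hσ : 0 < σ) (hβ : 0 < β)
    (U U' U'' : ℝ → ℝ)
    (hUcont : ContinuousOn U (Ici 0)) (hU0 : U 0 = 0)
    (hU'deriv : ∀ y > (0 : ℝ), HasDerivAt U (U' y) y)
    (hU''deriv : ∀ y > (0 : ℝ), HasDerivAt U' (U'' y) y)
    (hU''neg : ∀ y > (0 : ℝ), U'' y < 0)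
    (I : ℝ → ℝ)
    (hIpos : ∀ p > (0 : ℝ), 0 < I p)
    (hIright : ∀ p > (0 : ℝ), U' (I p) = p)
    (v v' v'' : ℝ → ℝ)
    (hv'deriv : ∀ x > (0 : ℝ), HasDerivAt v (v' x) x)
    (hv''deriv : ∀ x > (0 : ℝ), HasDerivAt v' (v'' x) x)
    (hconc : ConcaveOn ℝ (Ioi 0) v)
    (hv'pos : ∀ x > (0 : ℝ), 0 < v' x)
    (hHJB : ∀ x > (0 : ℝ), β * v x =
      (1 / 2) * σ ^ 2 * x ^ 2 * v'' x + (x ^ α - μ * x) * v' x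
        + U (I (v' x)) - v' x * I (v' x))
    (v0 : ℝ) (hv0 : Tendsto v (𝓝[>] 0) (𝓝 v0)) (hv0pos : 0 < v0) :
    Tendsto (fun x => x ^ α * v' x) (𝓝[>] 0) (𝓝 (β * v0)) ∧
      0 < β * v0 ∧
      Tendsto (fun x => I (v' x) / x ^ α) (𝓝[>] 0) (𝓝 0) := by
  have hI (p : ℝ) (hp : 0 < p) : 0 ≤ I p := (hIpos p hp).le
  have hU''nonpos (y : ℝ) (hy : y > 0) : U'' y ≤ 0 := (hU''neg y hy).le
  have hsup := sub_mul_le_legendreDual hUcont hU'deriv hU''deriv hU''nonpos hIpos hIright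
  have hUI := tendsto_comp_rightInverse_atTop hUcont hU0 hU''deriv hU''nonpos hIpos hIright
  have hv'anti : AntitoneOn v' (Ioi 0) := hconc.antitoneOn_of_hasDerivAt hv'deriv
  have hv''nonpos (x : ℝ) (hx : x > 0) : v'' x ≤ 0 :=
    (hv''deriv x hx).hasDerivWithinAt.nonpos_of_antitoneOn (isOpen_Ioi.preperfect x hx) hv'anti
  have hHJB' (x : ℝ) (hx : x > 0) : x ^ 2 * v'' x = 2 / σ ^ 2 *
      (β * v x + μ * (x * v' x) - legendreDual U I (v' x) - x ^ α * v' x) := by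
    rw [hHJB x hx, legendreDual]
    field_simp
    ring
  have hxv' := hconc.tendsto_mul_deriv_nhdsGT_zero hv'deriv (fun x hx => (hv'pos x hx).le) hv0
  have hv'top : Tendsto v' (𝓝[>] 0) atTop :=
    hv'anti.tendsto_nhdsGT_atTop <| not_bddAbove_deriv_of_hjb hα0 hα1 hβ.le hμ.le
      (by positivity) hconc hv'deriv hv''deriv hv'anti hv''nonpos hv'pos hv0
      (legendreDual_antitoneOn hI hsup)
      ((legendreDual_convexOn hI hsup).continuousOn isOpen_Ioi) hHJB'
  have hD : Tendsto (fun x => β * v x + μ * (x * v' x) - legendreDual U I (v' x)) (𝓝[>] 0)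
      (𝓝 (β * v0)) := by
    simpa using ((hv0.const_mul β).add (hxv'.const_mul μ)).sub
      ((tendsto_legendreDual_atTop hU0 hI hsup hUI).comp hv'top)
  have hF := tendsto_rpow_mul_of_sq_mul_deriv_eq hα1 (by positivity) hv''deriv hv''nonpos hHJB'
    hD hxv'
  refine ⟨hF, mul_pos hβ hv0pos, ?_⟩
  have hq := ((tendsto_mul_rightInverse_atTop hU0 hI hsup hUI).comp hv'top).div hF
    (mul_pos hβ hv0pos).ne'
  rw [zero_div] at hq
  refine hq.congr' ?_
  filter_upwards [self_mem_nhdsWithin] with x (hx : 0 < x)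
  change v' x * I (v' x) / (x ^ α * v' x) = I (v' x) / x ^ α
  rw [mul_comm (x ^ α), mul_div_mul_left _ _ (hv'pos x hx).ne']

/-- As `x ↓ 0`, `v'` is of the exact order `x^(−α)`: `x^α v'(x) → β v(0+) > 0`, and the
candidate optimal consumption is dominated by `x^α`: `I(v'(x))/x^α → 0`. -/
theorem hjb_solution_deriv_order_at_zero
    (α μ σ β : ℝ) (hα0 : 0 < α) (hα1 : α < 1) (hμ : 0 < μ) (hσ : 0 < σ) (hβ : 0 < β)
    (U U' U'' : ℝ → ℝ)
    (hUcont : ContinuousOn U (Ici 0)) (hU0 : U 0 = 0)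
    (hU'deriv : ∀ y > (0 : ℝ), HasDerivAt U (U' y) y)
    (hU''deriv : ∀ y > (0 : ℝ), HasDerivAt U' (U'' y) y)
    (hU''cont : ContinuousOn U'' (Ioi 0))
    (hU'pos : ∀ y > (0 : ℝ), 0 < U' y)
    (hU''neg : ∀ y > (0 : ℝ), U'' y < 0)
    (hU'0 : Tendsto U' (𝓝[>] 0) atTop)
    (hU'top : Tendsto U' atTop (𝓝 0))
    (I : ℝ → ℝ)
    (hIpos : ∀ p > (0 : ℝ), 0 < I p)
    (hIright : ∀ p > (0 : ℝ), U' (I p) = p)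
    (hIleft : ∀ y > (0 : ℝ), I (U' y) = y)
    (v v' v'' : ℝ → ℝ)
    (hv'deriv : ∀ x > (0 : ℝ), HasDerivAt v (v' x) x)
    (hv''deriv : ∀ x > (0 : ℝ), HasDerivAt v' (v'' x) x)
    (hv''cont : ContinuousOn v'' (Ioi 0))
    (hconc : ConcaveOn ℝ (Ioi 0) v)
    (hv'pos : ∀ x > (0 : ℝ), 0 < v' x)
    (hHJB : ∀ x > (0 : ℝ), β * v x =
      (1 / 2) * σ ^ 2 * x ^ 2 * v'' x + (x ^ α - μ * x) * v' x
        + U (I (v' x)) - v' x * I (v' x))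
    (φ₀ : ℝ) (hφ₀ : 0 < φ₀)
    (hvbound : ∀ x > (0 : ℝ), 0 ≤ v x ∧ v x ≤ x + φ₀)
    (v0 : ℝ) (hv0 : Tendsto v (𝓝[>] 0) (𝓝 v0)) (hv0pos : 0 < v0) :
    Tendsto (fun x => x ^ α * v' x) (𝓝[>] 0) (𝓝 (β * v0)) ∧
      0 < β * v0 ∧
      Tendsto (fun x => I (v' x) / x ^ α) (𝓝[>] 0) (𝓝 0) :=
  hjb_solution_deriv_order_at_zero_general α μ σ β hα0 hα1 hμ hσ hβ U U' U'' hUcont hU0 hU'deriv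
    hU''deriv hU''neg I hIpos hIright v v' v'' hv'deriv hv''deriv hconc hv'pos hHJB v0 hv0 hv0pos
end
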